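/- arXiv:0711.0086 — 2 statements merged into one kernel-verified Lean document; each statement's English description precedes it below -/
import Mathlib

section
/- Let n ≥ 1, k ≥ 1, l ≤ k, let O be an n×k column-incidence matrix (viewed as a real matrix), and let P_{lk} be the l×k truncation matrix. Then Σ_{σ ∈ Sym(n)} Σ_{π ∈ Sym(k)} P_σ·O·P_π·P_{lk}ᵀ = (n−1)!·k!·J_{n×l}, where J_{n×l} is the all-ones n×l matrix; equivalently, the average of P_σ·O·P_π·P_{lk}ᵀ over all pairs of permutations equals (1/n)·J_{n×l}. -/
open Matrix BigOperators

/-- A column-incidence matrix: a 0-1 matrix with exactly one 1 in each column. -/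
def IsColIncidence {n k : ℕ} (M : Matrix (Fin n) (Fin k) ℝ) : Prop :=
  (∀ i j, M i j = 0 ∨ M i j = 1) ∧ (∀ j, ∃! i, M i j = 1)

/-- The permutation matrix of a permutation `σ`. -/
def permMat {n : ℕ} (σ : Equiv.Perm (Fin n)) : Matrix (Fin n) (Fin n) ℝ :=
  Matrix.of fun i j => if σ j = i then 1 else 0

/-- The `l × k` truncation matrix `(I_l 0)`. -/
def trunc (l k : ℕ) : Matrix (Fin l) (Fin k) ℝ :=
  Matrix.of fun i j => if (i : ℕ) = (j : ℕ) then 1 else 0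

/-!
Entrywise, `(P_σ O P_π P_{lk}ᵀ) i j = O (σ⁻¹ i) (π j)`. For fixed `π`, the sum over `σ` visits
every row index `(n - 1)!` times, so it gives `(n - 1)!` times a column sum of `O`, which is `1`;
the remaining sum over `π` contributes the factor `k!`.
-/

open Equiv

lemma Fin.sum_perm_apply {M : Type*} [AddCommMonoid M] {m : ℕ} (g : Fin m → M) (x : Fin m) :
    ∑ σ : Perm (Fin m), g (σ x) = (m - 1).factorial • ∑ a, g a := by
  obtain ⟨m, rfl⟩ : ∃ m', m = m' + 1 := Nat.exists_eq_add_one.mpr x.pos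
  have hx : ∑ σ : Perm (Fin (m + 1)), g (σ x) = ∑ σ : Perm (Fin (m + 1)), g (σ 0) :=
    Fintype.sum_equiv (Equiv.mulRight (swap 0 x)) _ _ fun σ => by simp
  rw [hx, ← (Perm.decomposeFin).symm.sum_comp, Fintype.sum_prod_type]
  simp [Perm.decomposeFin_symm_apply_zero, Finset.sum_const, Finset.card_univ,
    Fintype.card_perm, Finset.sum_nsmul]

lemma Fin.sum_perm_inv_apply {M : Type*} [AddCommMonoid M] {m : ℕ} (g : Fin m → M)
    (x : Fin m) : ∑ σ : Perm (Fin m), g (σ⁻¹ x) = (m - 1).factorial • ∑ a, g a := by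
  rw [← Fin.sum_perm_apply g x]
  exact Fintype.sum_equiv (Equiv.inv _) _ _ fun σ => rfl

lemma permMat_eq_permMatrix {n : ℕ} (σ : Perm (Fin n)) : permMat σ = σ⁻¹.permMatrix ℝ := by
  ext i j
  simp [permMat, PEquiv.toMatrix_apply, Perm.inv_def, eq_comm, Equiv.eq_symm_apply]

lemma permMat_mul {n k : ℕ} (σ : Perm (Fin n)) (A : Matrix (Fin n) (Fin k) ℝ) :
    permMat σ * A = A.submatrix ⇑σ⁻¹ id := by
  rw [permMat_eq_permMatrix, PEquiv.toMatrix_toPEquiv_mul]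

lemma mul_permMat {n k : ℕ} (π : Perm (Fin k)) (A : Matrix (Fin n) (Fin k) ℝ) :
    A * permMat π = A.submatrix id π := by
  rw [permMat_eq_permMatrix, PEquiv.mul_toMatrix_toPEquiv]
  rfl

lemma mul_trunc_transpose {n k l : ℕ} (hlk : l ≤ k) (A : Matrix (Fin n) (Fin k) ℝ) :
    A * (trunc l k)ᵀ = A.submatrix id (Fin.castLE hlk) := by
  ext i j
  have hval (c : Fin k) : (j : ℕ) = c ↔ Fin.castLE hlk j = c := by simp [Fin.ext_iff]
  simp [Matrix.mul_apply, trunc, hval]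

lemma IsColIncidence.sum_col {n k : ℕ} {M : Matrix (Fin n) (Fin k) ℝ} (hM : IsColIncidence M)
    (j : Fin k) : ∑ i, M i j = 1 := by
  obtain ⟨i₀, hi₀, huniq⟩ := hM.2 j
  rw [Finset.sum_eq_single i₀ (fun i _ hi => (hM.1 i j).resolve_right (mt (huniq i) hi))
    (by simp), hi₀]

theorem stmt_16_general {n k l : ℕ} (hlk : l ≤ k)
    (O : Matrix (Fin n) (Fin k) ℝ) (hO : IsColIncidence O) :
    ∑ σ : Equiv.Perm (Fin n), ∑ π : Equiv.Perm (Fin k),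
        permMat σ * O * permMat π * (trunc l k)ᵀ
      = (((n - 1).factorial * k.factorial : ℕ) : ℝ) •
          (Matrix.of fun (_ : Fin n) (_ : Fin l) => (1 : ℝ)) := by
  ext i j
  simp only [Matrix.sum_apply, Matrix.smul_apply, of_apply, smul_eq_mul, mul_one, mul_trunc_transpose hlk,
    mul_permMat, permMat_mul, submatrix_apply, id]
  rw [Finset.sum_comm]
  calc ∑ π : Perm (Fin k), ∑ σ : Perm (Fin n), O (σ⁻¹ i) (π (Fin.castLE hlk j))
      = ∑ π : Perm (Fin k), ((n - 1).factorial : ℝ) := by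
        refine Finset.sum_congr rfl fun π _ => ?_
        rw [Fin.sum_perm_inv_apply (fun a => O a (π (Fin.castLE hlk j))), hO.sum_col,
          nsmul_one]
    _ = (((n - 1).factorial * k.factorial : ℕ) : ℝ) := by
        simp [Fintype.card_perm, mul_comm]

theorem stmt_16 {n k l : ℕ} (hn : 1 ≤ n) (hk : 1 ≤ k) (hlk : l ≤ k)
    (O : Matrix (Fin n) (Fin k) ℝ) (hO : IsColIncidence O) :
    ∑ σ : Equiv.Perm (Fin n), ∑ π : Equiv.Perm (Fin k),
        permMat σ * O * permMat π * (trunc l k)ᵀ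
      = (((n - 1).factorial * k.factorial : ℕ) : ℝ) •
          (Matrix.of fun (_ : Fin n) (_ : Fin l) => (1 : ℝ)) :=
  stmt_16_general hlk O hO
end

section
/- Let n ≥ 1 and let X be an n×n doubly stochastic real matrix. Then X can be written as a convex combination of at most (n−1)² + 1 permutation matrices; that is, there exist permutation matrices X₁, …, X_α with α ≤ (n−1)² + 1 and nonnegative reals λ₁, …, λ_α summing to 1 such that X = Σ_i λ_i·X_i. -/
open Matrix BigOperators

/-- A permutation matrix: a square 0-1 matrix with exactly one 1 in each row
and each column. -/
def IsPermMatrix {n : ℕ} (X : Matrix (Fin n) (Fin n) ℝ) : Prop :=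
  (∀ i j, X i j = 0 ∨ X i j = 1) ∧ (∀ i, ∃! j, X i j = 1) ∧ (∀ j, ∃! i, X i j = 1)

/-- A doubly stochastic matrix: nonnegative entries, all row sums and column
sums equal to 1. -/
def IsDoublyStochastic {n : ℕ} (X : Matrix (Fin n) (Fin n) ℝ) : Prop :=
  (∀ i j, 0 ≤ X i j) ∧ (∀ i, ∑ j, X i j = 1) ∧ (∀ j, ∑ i, X i j = 1)

lemma permMatrix_isPermMatrix {n : ℕ} (σ : Equiv.Perm (Fin n)) :
    IsPermMatrix (σ.permMatrix ℝ) := by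
  have happ : ∀ i j, σ.permMatrix ℝ i j = if σ i = j then 1 else 0 := by
    intro i j
    simp [Equiv.Perm.permMatrix, PEquiv.toMatrix_apply, Equiv.toPEquiv_apply]
  refine ⟨fun i j => ?_, fun i => ⟨σ i, ?_, fun j hj => ?_⟩, fun j => ⟨σ.symm j, ?_, fun i hi => ?_⟩⟩
  · rw [happ]; split <;> simp
  · show σ.permMatrix ℝ i (σ i) = 1
    rw [happ, if_pos rfl]
  · have hj' : σ.permMatrix ℝ i j = 1 := hj
    rw [happ] at hj'
    by_contra h
    rw [if_neg (fun hc : σ i = j => h hc.symm)] at hj'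
    exact one_ne_zero hj'.symm
  · show σ.permMatrix ℝ (σ.symm j) j = 1
    rw [happ, if_pos (σ.apply_symm_apply j)]
  · have hi' : σ.permMatrix ℝ i j = 1 := hi
    rw [happ] at hi'
    by_contra h
    rw [if_neg] at hi'
    · exact one_ne_zero hi'.symm
    · intro hc; exact h (by rw [← hc, Equiv.symm_apply_apply])

lemma isPermMatrix_row_sum {n : ℕ} {M : Matrix (Fin n) (Fin n) ℝ} (h : IsPermMatrix M) :
    ∀ i, ∑ j, M i j = 1 := by
  intro i
  obtain ⟨j, hj, huniq⟩ := h.2.1 i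
  rw [Finset.sum_eq_single j]
  · exact hj
  · intro b _ hb
    rcases h.1 i b with h0 | h1
    · exact h0
    · exact absurd (huniq b h1) hb
  · simp

lemma isPermMatrix_col_sum {n : ℕ} {M : Matrix (Fin n) (Fin n) ℝ} (h : IsPermMatrix M) :
    ∀ j, ∑ i, M i j = 1 := by
  intro j
  obtain ⟨i, hi, huniq⟩ := h.2.2 j
  rw [Finset.sum_eq_single i]
  · exact hi
  · intro b _ hb
    rcases h.1 b j with h0 | h1
    · exact h0
    · exact absurd (huniq b h1) hb
  · simp

/-- The submodule of matrices with zero row/col sums. -/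
def Vsub (n : ℕ) : Submodule ℝ (Matrix (Fin n) (Fin n) ℝ) where
  carrier := {M | (∀ i, ∑ j, M i j = 0) ∧ (∀ j, ∑ i, M i j = 0)}
  add_mem' := by
    rintro a b ⟨ha1, ha2⟩ ⟨hb1, hb2⟩
    constructor <;> intro i <;>
      simp [Matrix.add_apply, Finset.sum_add_distrib, ha1 i, ha2 i, hb1 i, hb2 i]
  zero_mem' := by constructor <;> intro i <;> simp
  smul_mem' := by
    rintro c a ⟨ha1, ha2⟩
    constructor <;> intro i <;> simp [Matrix.smul_apply, ← Finset.mul_sum, ha1 i, ha2 i]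

lemma finrank_Vsub_le (m : ℕ) : Module.finrank ℝ (Vsub (m+1)) ≤ m ^ 2 := by
  classical
  let f : Vsub (m+1) →ₗ[ℝ] Matrix (Fin m) (Fin m) ℝ :=
    { toFun := fun M => fun i j => (M : Matrix (Fin (m+1)) (Fin (m+1)) ℝ) i.castSucc j.castSucc
      map_add' := by intros; rfl
      map_smul' := by intros; rfl }
  have hinj : Function.Injective f := by
    rw [injective_iff_map_eq_zero]
    rintro ⟨M, hM1, hM2⟩ h
    have h0 : ∀ i j : Fin m, M i.castSucc j.castSucc = 0 := by
      intro i j; exact congrFun (congrFun h i) j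
    have hrow : ∀ i : Fin m, M i.castSucc (Fin.last m) = 0 := by
      intro i
      have := hM1 i.castSucc
      rw [Fin.sum_univ_castSucc] at this
      simpa [h0] using this
    have hcol : ∀ j : Fin (m+1), M (Fin.last m) j = 0 := by
      intro j
      have := hM2 j
      rw [Fin.sum_univ_castSucc] at this
      rcases Fin.eq_castSucc_or_eq_last j with ⟨j', rfl⟩ | rfl
      · simpa [h0] using this
      · simpa [hrow] using this
    ext i j
    rcases Fin.eq_castSucc_or_eq_last i with ⟨i', rfl⟩ | rfl
    · rcases Fin.eq_castSucc_or_eq_last j with ⟨j', rfl⟩ | rfl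
      · exact h0 i' j'
      · exact hrow i'
    · exact hcol j
  calc Module.finrank ℝ (Vsub (m+1)) ≤ Module.finrank ℝ (Matrix (Fin m) (Fin m) ℝ) :=
        LinearMap.finrank_le_finrank_of_injective hinj
    _ = m ^ 2 := by simp [Module.finrank_matrix, sq]

theorem stmt_17 {n : ℕ} (hn : 1 ≤ n) (X : Matrix (Fin n) (Fin n) ℝ)
    (hX : IsDoublyStochastic X) :
    ∃ (α : ℕ), α ≤ (n - 1) ^ 2 + 1 ∧
      ∃ (P : Fin α → Matrix (Fin n) (Fin n) ℝ) (lam : Fin α → ℝ),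
        (∀ i, IsPermMatrix (P i)) ∧ (∀ i, 0 ≤ lam i) ∧ (∑ i, lam i = 1) ∧
        X = ∑ i, lam i • P i := by
  classical
  obtain ⟨m, rfl⟩ : ∃ m, n = m + 1 := ⟨n - 1, (Nat.succ_pred_eq_of_pos hn).symm⟩
  set S : Set (Matrix (Fin (m+1)) (Fin (m+1)) ℝ) := {M | IsPermMatrix M} with hS
  -- Step 1 : X ∈ convexHull ℝ S
  have hXd : X ∈ doublyStochastic ℝ (Fin (m+1)) := by
    rw [mem_doublyStochastic_iff_sum]
    exact ⟨hX.1, hX.2.1, hX.2.2⟩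
  obtain ⟨w, hw0, hw1, hwX⟩ := exists_eq_sum_perm_of_mem_doublyStochastic hXd
  have hXch : X ∈ convexHull ℝ S :=
    mem_convexHull_of_exists_fintype w (fun σ => σ.permMatrix ℝ) hw0 hw1
      (fun σ => permMatrix_isPermMatrix σ) hwX
  -- Step 2 : Carathéodory
  obtain ⟨ι, hfin, z, lam, hzS, hzAI, hlam0, hlam1, hcomb⟩ :=
    eq_pos_convex_span_of_mem_convexHull hXch
  have hne : Nonempty ι := by
    by_contra h
    rw [not_nonempty_iff] at h
    simp at hlam1
  -- Step 3 : bound the cardinality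
  have hspan : vectorSpan ℝ (Set.range z) ≤ Vsub (m+1) := by
    rw [vectorSpan_def]
    refine Submodule.span_le.2 ?_
    rintro v ⟨a, ⟨i, rfl⟩, b, ⟨j, rfl⟩, rfl⟩
    have hi := hzS ⟨i, rfl⟩
    have hj := hzS ⟨j, rfl⟩
    constructor
    · intro k
      simp only [vsub_eq_sub, Matrix.sub_apply, Finset.sum_sub_distrib,
        isPermMatrix_row_sum hi k, isPermMatrix_row_sum hj k, sub_self]
    · intro k
      simp only [vsub_eq_sub, Matrix.sub_apply, Finset.sum_sub_distrib,
        isPermMatrix_col_sum hi k, isPermMatrix_col_sum hj k, sub_self]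
  have hcard : Fintype.card ι ≤ m ^ 2 + 1 := by
    have h1 := hzAI.finrank_vectorSpan_add_one
    have h2 : Module.finrank ℝ (vectorSpan ℝ (Set.range z)) ≤ m ^ 2 :=
      le_trans (Submodule.finrank_mono hspan) (finrank_Vsub_le m)
    omega
  -- Step 4 : reindex by Fin
  refine ⟨Fintype.card ι, by simpa using hcard, ?_⟩
  let e : Fin (Fintype.card ι) ≃ ι := (Fintype.equivFin ι).symm
  refine ⟨fun i => z (e i), fun i => lam (e i), fun i => hzS ⟨e i, rfl⟩,
    fun i => (hlam0 (e i)).le, ?_, ?_⟩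
  · rw [Equiv.sum_comp e lam]; exact hlam1
  · rw [Equiv.sum_comp e (fun i => lam i • z i)]; exact hcomb.symm
end
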